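/- arXiv:0704.4003 — 2 statements merged into one kernel-verified Lean document; each statement's English description precedes it below -/
import Mathlib

section
/- Let w be a weight structure on a triangulated category C and let D ⊆ C be a full triangulated subcategory such that w induces a weight structure on D, i.e. (Obj D ∩ C^{w≤0}, Obj D ∩ C^{w≥0}) is a weight structure on D; let HD denote its heart. Then: (1) the Karoubi-closures in the Verdier quotient C/D of (the images of) C^{w≤0} and C^{w≥0} form a weight structure on C/D; (2) the heart of this weight structure on C/D is the Karoubi-closure in C/D of the factor category Hw/HD, where Hw/HD has the same objects as Hw and morphism groups Hom_{Hw}(X,Y) modulo the subgroup of morphisms factoring through objects of HD; (3) if w is bounded then so is the induced weight structure on C/D. -/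
open CategoryTheory CategoryTheory.Limits CategoryTheory.Pretriangulated ZeroObject

universe v u

variable (C : Type u) [Category.{v} C] [HasZeroObject C] [HasShift C ℤ] [Preadditive C]
  [∀ n : ℤ, (shiftFunctor C n).Additive] [Pretriangulated C]

/-- `X` is a retract of `Y` in `C`: the identity of `X` factors through `Y`. -/
def IsRetractOf (X Y : C) : Prop :=
  ∃ (i : X ⟶ Y) (r : Y ⟶ X), i ≫ r = 𝟙 X

/-- A weight structure on the triangulated category `C` (Bondarko).
`LE` is the class `C^{w≤0}`, `GE` is the class `C^{w≥0}`. -/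
structure WeightStructure where
  /-- the class `C^{w≤0}` -/
  LE : Set C
  /-- the class `C^{w≥0}` -/
  GE : Set C
  zero_mem_LE : (0 : C) ∈ LE
  zero_mem_GE : (0 : C) ∈ GE
  sum_mem_LE : ∀ X Y : C, X ∈ LE → Y ∈ LE → (X ⊞ Y) ∈ LE
  sum_mem_GE : ∀ X Y : C, X ∈ GE → Y ∈ GE → (X ⊞ Y) ∈ GE
  retract_mem_LE : ∀ X Y : C, IsRetractOf C X Y → Y ∈ LE → X ∈ LE
  retract_mem_GE : ∀ X Y : C, IsRetractOf C X Y → Y ∈ GE → X ∈ GE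
  shift_mem_LE : ∀ X : C, X ∈ LE → X⟦(1 : ℤ)⟧ ∈ LE
  shift_mem_GE : ∀ X : C, X ∈ GE → X⟦(-1 : ℤ)⟧ ∈ GE
  orthogonal : ∀ X Y : C, X ∈ GE → Y ∈ LE → ∀ f : X ⟶ Y⟦(1 : ℤ)⟧, f = 0
  exists_weight_decomposition : ∀ X : C, ∃ (A B : C) (g : X ⟶ A) (f : A ⟶ B)
    (h : B ⟶ X⟦(1 : ℤ)⟧), A ∈ LE ∧ B ∈ GE ∧ Triangle.mk g f h ∈ distTriang C


/-- The closure properties of (the object class of) a strictly full triangulated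
subcategory of `C`: contains `0`, closed under isomorphisms, shifts, and cones. -/
def IsTriangulatedClass (S : Set C) : Prop :=
  ((0 : C) ∈ S) ∧
  (∀ X Y : C, X ∈ S → Nonempty (X ≅ Y) → Y ∈ S) ∧
  (∀ (X : C) (n : ℤ), X ∈ S → X⟦n⟧ ∈ S) ∧
  (∀ T : Triangle C, (T ∈ distTriang C) → T.obj₁ ∈ S → T.obj₂ ∈ S → T.obj₃ ∈ S)

/-- The class of morphisms of `C` whose cone lies in `S`; inverting these
morphisms realises the Verdier quotient of `C` by the subcategory on `S`. -/
def coneIn (S : Set C) : MorphismProperty C :=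
  fun X Y f => ∃ (Z : C) (g : Y ⟶ Z) (h : Z ⟶ X⟦(1 : ℤ)⟧),
    (Triangle.mk f g h ∈ distTriang C) ∧ Z ∈ S

universe v' u'

section Auxiliary

namespace VWS

section GeneralShift

variable {D : Type u'} [Category.{v'} D] [HasShift D ℤ] [Preadditive D]
  [∀ n : ℤ, (shiftFunctor D n).Additive]

/-- If all maps `U ⟶ V⟦1⟧` vanish, then all maps `U⟦-1⟧ ⟶ V` vanish. -/
lemma orth_shift {U V : D} (h0 : ∀ g : U ⟶ V⟦(1 : ℤ)⟧, g = 0)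
    (f : U⟦(-1 : ℤ)⟧ ⟶ V) : f = 0 := by
  have e := (shiftFunctorCompIsoId D (-1 : ℤ) (1 : ℤ) (by omega)).app U
  have h : e.inv ≫ f⟦(1 : ℤ)⟧' = 0 := h0 _
  have h2 : f⟦(1 : ℤ)⟧' = 0 := by
    rw [← Iso.hom_inv_id_assoc e (f⟦(1 : ℤ)⟧'), h, comp_zero]
  exact (shiftFunctor D (1 : ℤ)).map_injective (by rw [h2, Functor.map_zero])

end GeneralShift

section CSide

variable {C}

/-- Double rotation of a distinguished triangle starting at a negative shift. -/
lemma rot2_dist {P Q R : C} (a : P⟦(-1 : ℤ)⟧ ⟶ Q) (b : Q ⟶ R)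
    (e : R ⟶ P⟦(-1 : ℤ)⟧⟦(1 : ℤ)⟧) (hd : Triangle.mk a b e ∈ distTriang C) :
    Triangle.mk (e ≫ ((shiftFunctorCompIsoId C (-1 : ℤ) (1 : ℤ) (by omega)).app P).hom)
      (((shiftFunctorCompIsoId C (-1 : ℤ) (1 : ℤ) (by omega)).app P).inv ≫ (-(a⟦(1 : ℤ)⟧')))
      (-(b⟦(1 : ℤ)⟧')) ∈ distTriang C := by
  refine isomorphic_distinguished _ (rot_of_distTriang _ (rot_of_distTriang _ hd)) _ ?_
  exact Triangle.isoMk _ _ (Iso.refl _)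
    (((shiftFunctorCompIsoId C (-1 : ℤ) (1 : ℤ) (by omega)).app P).symm) (Iso.refl _)
    (by show (e ≫ ((shiftFunctorCompIsoId C (-1 : ℤ) (1 : ℤ) (by omega)).app P).hom) ≫ ((shiftFunctorCompIsoId C (-1 : ℤ) (1 : ℤ) (by omega)).app P).inv = 𝟙 R ≫ e; simp)
    (by show (((shiftFunctorCompIsoId C (-1 : ℤ) (1 : ℤ) (by omega)).app P).inv ≫ (-(a⟦(1 : ℤ)⟧'))) ≫ 𝟙 _ = ((shiftFunctorCompIsoId C (-1 : ℤ) (1 : ℤ) (by omega)).app P).inv ≫ (-(a⟦(1 : ℤ)⟧')); simp)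
    (by show (-(b⟦(1 : ℤ)⟧')) ≫ (𝟙 R)⟦(1 : ℤ)⟧' = 𝟙 _ ≫ (-(b⟦(1 : ℤ)⟧')); simp)

variable (w : WeightStructure C)

lemma mem_GE_of_iso {X Y : C} (e : X ≅ Y) (hY : Y ∈ w.GE) : X ∈ w.GE :=
  w.retract_mem_GE X Y ⟨e.hom, e.inv, e.hom_inv_id⟩ hY

lemma mem_GE_of_orth {Y : C} (hY : ∀ A ∈ w.LE, ∀ f : Y ⟶ A⟦(1 : ℤ)⟧, f = 0) :
    Y ∈ w.GE := by
  obtain ⟨A, B, a, b, e, hA, hB, hd⟩ := w.exists_weight_decomposition (Y⟦(-1 : ℤ)⟧)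
  have hd2 := rot2_dist a b e hd
  obtain ⟨d, hd'⟩ := Triangle.coyoneda_exact₂ _ hd2 (𝟙 Y)
    (by erw [Category.id_comp]; exact hY _ hA _)
  exact w.retract_mem_GE Y B ⟨d, _, hd'.symm⟩ hB

lemma ext_GE {T : Triangle C} (hT : T ∈ distTriang C) (h₁ : T.obj₁ ∈ w.GE)
    (h₃ : T.obj₃ ∈ w.GE) : T.obj₂ ∈ w.GE := by
  apply mem_GE_of_orth w
  intro A hA f
  obtain ⟨g, hg⟩ := Triangle.yoneda_exact₂ _ hT f (w.orthogonal _ _ h₁ hA _)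
  rw [hg, w.orthogonal _ _ h₃ hA g, comp_zero]

end CSide

section WHat

variable {C} {S : Set C}

lemma coneIn_id (hS : IsTriangulatedClass C S) (X : C) : coneIn C S (𝟙 X) :=
  ⟨0, 0, 0, contractible_distinguished X, hS.1⟩

/-- morphisms that are composites of `n` morphisms with cone in `S` -/
inductive NComp (S : Set C) : ℕ → ∀ {X Y : C}, (X ⟶ Y) → Prop
  | base {X Y : C} {f : X ⟶ Y} (hf : coneIn C S f) : NComp S 1 f
  | comp {n : ℕ} {X Y Z : C} {f : X ⟶ Y} {g : Y ⟶ Z} (hf : NComp S n f)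
      (hg : coneIn C S g) : NComp S (n + 1) (f ≫ g)

/-- the multiplicative closure of `coneIn C S` -/
def hatW (S : Set C) : MorphismProperty C := fun _ _ f => ∃ n, NComp S n f

lemma coneIn_hatW {X Y : C} {f : X ⟶ Y} (hf : coneIn C S f) : hatW S f :=
  ⟨1, .base hf⟩

lemma hatW_comp_aux {Y Z : C} {g : Y ⟶ Z} {m : ℕ} (hg : NComp S m g) :
    ∀ {X : C} (f : X ⟶ Y) {n : ℕ}, NComp S n f → ∃ k, NComp S k (f ≫ g) := by
  induction hg with
  | base h => exact fun f _ hf => ⟨_, .comp hf h⟩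
  | comp hg₀ hw ih =>
      intro X f n hf
      obtain ⟨k, hk⟩ := ih f hf
      exact ⟨k + 1, by
        have := NComp.comp hk hw
        rwa [Category.assoc] at this⟩

lemma hatW_comp {X Y Z : C} {f : X ⟶ Y} {g : Y ⟶ Z} (hf : hatW S f) (hg : hatW S g) :
    hatW S (f ≫ g) := by
  obtain ⟨n, hf⟩ := hf
  obtain ⟨m, hg⟩ := hg
  exact hatW_comp_aux hg f hf

lemma hatW_multiplicative (hS : IsTriangulatedClass C S) :
    (hatW S).IsMultiplicative :=
  { id_mem := fun X => coneIn_hatW (coneIn_id hS X)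
    comp_mem := fun f g hf hg => hatW_comp hf hg }

lemma hatW_isInvertedBy {D : Type*} [Category D] {F : C ⥤ D}
    (hF : (coneIn C S).IsInvertedBy F) : (hatW S).IsInvertedBy F := by
  rintro X Y f ⟨n, hf⟩
  induction hf with
  | base h => exact hF _ h
  | comp hf hw ih =>
      rw [Functor.map_comp]
      haveI := ih
      haveI := hF _ hw
      infer_instance

lemma hatW_isLocalization {E' : Type*} [Category E'] (L : C ⥤ E')
    [L.IsLocalization (coneIn C S)] : L.IsLocalization (hatW S) := by
  have hWL : (coneIn C S).IsInvertedBy L := Localization.inverts L (coneIn C S)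
  have hW2L : (hatW S).IsInvertedBy L := hatW_isInvertedBy hWL
  have hQ₁ : (hatW S).IsInvertedBy (coneIn C S).Q :=
    hatW_isInvertedBy (coneIn C S).Q_inverts
  have hQ₂ : (coneIn C S).IsInvertedBy (hatW S).Q :=
    fun X Y f hf => (hatW S).Q_inverts _ (coneIn_hatW hf)
  let F : (hatW S).Localization ⥤ (coneIn C S).Localization :=
    Localization.Construction.lift (coneIn C S).Q hQ₁
  let G : (coneIn C S).Localization ⥤ (hatW S).Localization :=
    Localization.Construction.lift (hatW S).Q hQ₂
  have hF : (hatW S).Q ⋙ F = (coneIn C S).Q := Localization.Construction.fac _ _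
  have hG : (coneIn C S).Q ⋙ G = (hatW S).Q := Localization.Construction.fac _ _
  have hFG : F ⋙ G = 𝟭 _ := Localization.Construction.uniq _ _
    (by rw [← Functor.assoc, hF, hG, Functor.comp_id])
  have hGF : G ⋙ F = 𝟭 _ := Localization.Construction.uniq _ _
    (by rw [← Functor.assoc, hG, hF, Functor.comp_id])
  have hFE : F.IsEquivalence :=
    (CategoryTheory.Equivalence.mk F G (eqToIso hFG.symm) (eqToIso hGF)).isEquivalence_functor
  have key : F ⋙ Localization.Construction.lift L hWL =
      Localization.Construction.lift L hW2L := by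
    apply Localization.Construction.uniq
    rw [← Functor.assoc, hF, Localization.Construction.fac, Localization.Construction.fac]
  have hLE : (Localization.Construction.lift L hWL).IsEquivalence :=
    (inferInstance : L.IsLocalization (coneIn C S)).isEquivalence
  exact
    { inverts := hW2L
      isEquivalence := by rw [← key]; infer_instance }

lemma ore_single {X' M X'' : C} {u : X' ⟶ M} (hu : coneIn C S u) (q : X'' ⟶ M) :
    ∃ (P : C) (s : P ⟶ X'') (f : P ⟶ X'), coneIn C S s ∧ s ≫ q = f ≫ u := by
  obtain ⟨Z, p, h, hd, hZ⟩ := hu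
  obtain ⟨P, s, h', hd'⟩ := distinguished_cocone_triangle₁ (q ≫ p)
  have h0 : s ≫ (q ≫ p) = 0 := comp_distTriang_mor_zero₁₂ _ hd'
  obtain ⟨f, hf⟩ := Triangle.coyoneda_exact₂ _ hd (s ≫ q)
    (by erw [Category.assoc]; exact h0)
  exact ⟨P, s, f, ⟨Z, q ≫ p, h', hd', hZ⟩, hf⟩

lemma ore {n : ℕ} {X' M : C} {u : X' ⟶ M} (hu : NComp S n u) :
    ∀ {X'' : C} (q : X'' ⟶ M), ∃ (P : C) (s : P ⟶ X'') (f : P ⟶ X'),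
      NComp S n s ∧ s ≫ q = f ≫ u := by
  induction hu with
  | base h =>
      intro X'' q
      obtain ⟨P, s, f, hs, he⟩ := ore_single h q
      exact ⟨P, s, f, .base hs, he⟩
  | comp hu₀ hw ih =>
      intro X'' q
      obtain ⟨P₁, s₁, q₁, hs₁, he₁⟩ := ore_single hw q
      obtain ⟨P₂, s₂, f₂, hs₂, he₂⟩ := ih q₁
      refine ⟨P₂, s₂ ≫ s₁, f₂, .comp hs₂ hs₁, ?_⟩
      rw [Category.assoc, he₁, ← Category.assoc, he₂, Category.assoc]

lemma cancel_single (hS : IsTriangulatedClass C S) {X Y Y' : C} {s : Y ⟶ Y'}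
    (hs : coneIn C S s) (g : X ⟶ Y) (hg : g ≫ s = 0) :
    ∃ (X₀ : C) (t : X₀ ⟶ X), coneIn C S t ∧ t ≫ g = 0 := by
  obtain ⟨Z, p, h, hd, hZ⟩ := hs
  have hd' := inv_rot_of_distTriang _ hd
  obtain ⟨e, he⟩ := Triangle.coyoneda_exact₂ _ hd' g hg
  obtain ⟨X₀, t, ω, hd''⟩ := distinguished_cocone_triangle₁ e
  have h0 : t ≫ e = 0 := comp_distTriang_mor_zero₁₂ _ hd''
  exact ⟨X₀, t, ⟨Z⟦(-1 : ℤ)⟧, e, ω, hd'', hS.2.2.1 Z (-1) hZ⟩,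
    by erw [he, ← Category.assoc, h0, zero_comp]⟩

lemma cancel (hS : IsTriangulatedClass C S) {n : ℕ} {Y Y' : C} {s : Y ⟶ Y'}
    (hs : NComp S n s) :
    ∀ {X : C} (g : X ⟶ Y), g ≫ s = 0 →
      ∃ (X₀ : C) (t : X₀ ⟶ X), hatW S t ∧ t ≫ g = 0 := by
  induction hs with
  | base h =>
      intro X g hg
      obtain ⟨X₀, t, ht, h0⟩ := cancel_single hS h g hg
      exact ⟨X₀, t, coneIn_hatW ht, h0⟩
  | comp hs₀ hw ih =>
      intro X g hg
      obtain ⟨X₁, t₁, ht₁, h1⟩ := cancel_single hS hw (g ≫ _)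
        (by rw [Category.assoc]; exact hg)
      obtain ⟨X₂, t₂, ht₂, h2⟩ := ih (t₁ ≫ g)
        (by rw [Category.assoc]; exact h1)
      exact ⟨X₂, t₂ ≫ t₁, hatW_comp ht₂ (coneIn_hatW ht₁),
        by rw [Category.assoc]; exact h2⟩

lemma hasRightCalc (hS : IsTriangulatedClass C S) :
    (hatW S).HasRightCalculusOfFractions := by
  haveI : (hatW S).IsMultiplicative := hatW_multiplicative hS
  refine ⟨?_, ?_⟩
  · intro X Y φ
    obtain ⟨n, hn⟩ := φ.hs
    obtain ⟨P, s', f', hs', he⟩ := ore hn φ.f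
    exact ⟨MorphismProperty.RightFraction.mk s' ⟨n, hs'⟩ f', he⟩
  · intro X Y Y' f₁ f₂ s hs he
    obtain ⟨n, hn⟩ := hs
    obtain ⟨X₀, t, ht, h0⟩ := cancel hS hn (f₁ - f₂)
      (by rw [Preadditive.sub_comp, he, sub_self])
    exact ⟨X₀, t, ht, by rwa [Preadditive.comp_sub, sub_eq_zero] at h0⟩

end WHat

section Refine

variable {C} {S : Set C} (w : WeightStructure C)

/-- One-step refinement: a morphism with cone in `S` into an object of `GE` can be
refined to one whose cone is in `GE ∩ S`. -/
lemma refine_one (hS : IsTriangulatedClass C S)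
    (hind : ∀ X ∈ S, ∃ (A B : C) (g : X ⟶ A) (f : A ⟶ B) (h : B ⟶ X⟦(1 : ℤ)⟧),
      A ∈ w.LE ∩ S ∧ B ∈ w.GE ∩ S ∧ Triangle.mk g f h ∈ distTriang C)
    {X' X : C} {s : X' ⟶ X} (hs : coneIn C S s) (hX : X ∈ w.GE) :
    ∃ (X₁ : C) (t : X₁ ⟶ X') (B : C) (δ : X ⟶ B) (ω : B ⟶ X₁⟦(1 : ℤ)⟧),
      B ∈ w.GE ∩ S ∧ Triangle.mk (t ≫ s) δ ω ∈ distTriang C := by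
  obtain ⟨Z, p, h, hd, hZ⟩ := hs
  obtain ⟨A, B, a, b, e, hA, hB, hd₁⟩ := hind (Z⟦(-1 : ℤ)⟧) (hS.2.2.1 Z (-1) hZ)
  have hd₂ := rot2_dist a b e hd₁
  obtain ⟨δ₀, hδ⟩ := Triangle.coyoneda_exact₂ _ hd₂ p (w.orthogonal _ _ hX hA.1 _)
  obtain ⟨X₁, r, ω, hd₃⟩ := distinguished_cocone_triangle₁ δ₀
  have h12 : r ≫ δ₀ = 0 := comp_distTriang_mor_zero₁₂ _ hd₃
  have hr : r ≫ p = 0 := by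
    erw [hδ, ← Category.assoc, h12, zero_comp]
  obtain ⟨t, ht⟩ := Triangle.coyoneda_exact₂ _ hd r hr
  have ht' : r = t ≫ s := ht
  refine ⟨X₁, t, B, δ₀, ω, hB, ?_⟩
  erw [← ht']; assumption

/-- A tower of one-step refinements. -/
inductive Tower (w : WeightStructure C) (S : Set C) : ∀ {X Y : C}, (X ⟶ Y) → Prop
  | id (X : C) : Tower w S (𝟙 X)
  | comp {X M Y B : C} {c : X ⟶ M} {σ : M ⟶ Y} (hc : Tower w S c) (δ : Y ⟶ B)
      (ω : B ⟶ M⟦(1 : ℤ)⟧) (hB : B ∈ w.GE ∩ S) (hd : Triangle.mk σ δ ω ∈ distTriang C) :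
      Tower w S (c ≫ σ)

lemma tower_hatW (hS : IsTriangulatedClass C S) {X Y : C} {r : X ⟶ Y}
    (htw : Tower w S r) : hatW S r := by
  induction htw with
  | id => exact coneIn_hatW (coneIn_id hS _)
  | comp hc δ ω hB hd ih => exact hatW_comp ih (coneIn_hatW ⟨_, δ, ω, hd, hB.2⟩)

lemma tower_descent {X Y : C} {r : X ⟶ Y} (htw : Tower w S r) {T : C}
    (hT : T ∈ w.LE) (g : X ⟶ T) : ∃ f : Y ⟶ T, r ≫ f = g := by
  induction htw with
  | id => exact ⟨g, by simp⟩
  | @comp M Y B c σ hc δ ω hB hd ih =>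
      obtain ⟨h, hh⟩ := ih
      have hd' := inv_rot_of_distTriang _ hd
      have h0 : (Triangle.mk σ δ ω).invRotate.mor₁ ≫ h = 0 :=
        orth_shift (fun g' => w.orthogonal B T hB.1 hT g') _
      obtain ⟨f, hf⟩ := Triangle.yoneda_exact₂ _ hd' h h0
      have hf' : h = σ ≫ f := hf
      exact ⟨f, by erw [Category.assoc, ← hf', hh]⟩

lemma tower_factor (hS : IsTriangulatedClass C S) {X Y : C} {r : X ⟶ Y}
    (htw : Tower w S r) :
    ∀ {Y' : C} (f : Y ⟶ Y'), r ≫ f = 0 →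
      ∃ (Z : C) (u : Y ⟶ Z) (v : Z ⟶ Y'), Z ∈ w.GE ∩ S ∧ f = u ≫ v := by
  induction htw with
  | id =>
      intro Y' f hf
      rw [Category.id_comp] at hf
      exact ⟨0, 0, 0, ⟨w.zero_mem_GE, hS.1⟩, by simp [hf]⟩
  | @comp M Y B c σ hc δ ω hB hd ih =>
      intro Y' f hf
      obtain ⟨Z', u', v', hZ', hfac⟩ := ih (σ ≫ f) (by rw [← Category.assoc]; exact hf)
      have hd₁ : (Triangle.mk σ δ ω).invRotate ∈ distTriang C := inv_rot_of_distTriang _ hd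
      set m : B⟦(-1 : ℤ)⟧ ⟶ M := (Triangle.mk σ δ ω).invRotate.mor₁ with hm
      obtain ⟨N, ι, π, hd₂⟩ := distinguished_cocone_triangle (m ≫ u')
      have hNS : N ∈ S := hS.2.2.2 _ hd₂ (hS.2.2.1 B (-1) hB.2) hZ'.2
      have hBB : B⟦(-1 : ℤ)⟧⟦(1 : ℤ)⟧ ∈ w.GE :=
        mem_GE_of_iso w ((shiftFunctorCompIsoId C (-1 : ℤ) (1 : ℤ) (by omega)).app B) hB.1
      have hNGE : N ∈ w.GE := ext_GE w (rot_of_distTriang _ hd₂) hZ'.1 hBB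
      obtain ⟨wm0, hwm₁, -⟩ := complete_distinguished_triangle_morphism
        ((Triangle.mk σ δ ω).invRotate) (Triangle.mk (m ≫ u') ι π) hd₁ hd₂ (𝟙 _) u'
        (by erw [Category.id_comp]; rfl)
      have hex : ∃ wm2 : Y ⟶ N, σ ≫ wm2 = u' ≫ ι := ⟨wm0, hwm₁⟩
      obtain ⟨wm', hσw⟩ := hex
      have hmσ : m ≫ σ = 0 := comp_distTriang_mor_zero₁₂ _ hd₁
      have hm0 : (m ≫ u') ≫ v' = 0 := by
        rw [Category.assoc, ← hfac, ← Category.assoc, hmσ, zero_comp]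
      obtain ⟨vb, hvb⟩ := Triangle.yoneda_exact₂ _ hd₂ v' hm0
      have hvb' : v' = ι ≫ vb := hvb
      have hg : σ ≫ (f - wm' ≫ vb) = 0 := by
        erw [Preadditive.comp_sub, hfac, ← Category.assoc, hσw, Category.assoc, ← hvb',
          sub_self]
      obtain ⟨k, hk⟩ := Triangle.yoneda_exact₂ _ hd (f - wm' ≫ vb) hg
      have hk' : f - wm' ≫ vb = δ ≫ k := hk
      refine ⟨N ⊞ B, biprod.lift wm' δ, biprod.desc vb k,
        ⟨w.sum_mem_GE _ _ hNGE hB.1, ?_⟩, ?_⟩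
      · exact hS.2.2.2 _ (inv_rot_of_distTriang _ (binaryBiproductTriangle_distinguished N B))
          (hS.2.2.1 B (-1) hB.2) hNS
      · erw [biprod.lift_desc, ← hk']
        abel

lemma refineW (hS : IsTriangulatedClass C S)
    (hind : ∀ X ∈ S, ∃ (A B : C) (g : X ⟶ A) (f : A ⟶ B) (h : B ⟶ X⟦(1 : ℤ)⟧),
      A ∈ w.LE ∩ S ∧ B ∈ w.GE ∩ S ∧ Triangle.mk g f h ∈ distTriang C) :
    ∀ (n : ℕ) (X' X : C) (s : X' ⟶ X), NComp S n s → X ∈ w.GE →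
      ∃ (X₁ : C) (t : X₁ ⟶ X'), Tower w S (t ≫ s) := by
  intro n
  induction n with
  | zero => intro X' X s hs; cases hs
  | succ n ih =>
      intro X' X s hs hX
      cases hs with
      | base h =>
          obtain ⟨X₁, t, B, δ, ω, hB, hd⟩ := refine_one w hS hind h hX
          refine ⟨X₁, t, ?_⟩
          have h2 : Tower w S (𝟙 X₁ ≫ (t ≫ s)) := Tower.comp (Tower.id X₁) δ ω hB hd
          rwa [Category.id_comp] at h2
      | @comp n _ M _ u v hu hv =>
          obtain ⟨X'', tv, B₁, δ, ω, hB₁, hd₁⟩ := refine_one w hS hind hv hX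
          have hX'' : X'' ∈ w.GE :=
            ext_GE w (inv_rot_of_distTriang _ hd₁) (w.shift_mem_GE B₁ hB₁.1) hX
          obtain ⟨P, s', f', hs', he⟩ := ore hu tv
          obtain ⟨P₁, t', htw⟩ := ih P X'' s' hs' hX''
          refine ⟨P₁, t' ≫ f', ?_⟩
          have h2 : Tower w S ((t' ≫ s') ≫ (tv ≫ v)) := Tower.comp htw δ ω hB₁ hd₁
          have heq : (t' ≫ f') ≫ (u ≫ v) = (t' ≫ s') ≫ (tv ≫ v) := by
            conv_lhs => rw [Category.assoc, ← Category.assoc f' u v, ← he,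
              Category.assoc, ← Category.assoc]
          rwa [← heq] at h2

end Refine

section ESide

variable {C} {S : Set C}
variable {E : Type u'} [Category.{v'} E] [HasZeroObject E] [HasShift E ℤ] [Preadditive E]
  [∀ n : ℤ, (shiftFunctor E n).Additive] [Pretriangulated E]
variable (w : WeightStructure C) (L : C ⥤ E)

/-- transitivity of retracts -/
lemma retract_trans {X Y Z : E} (h₁ : IsRetractOf E X Y) (h₂ : IsRetractOf E Y Z) :
    IsRetractOf E X Z := by
  obtain ⟨i₁, r₁, h₁⟩ := h₁
  obtain ⟨i₂, r₂, h₂⟩ := h₂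
  exact ⟨i₁ ≫ i₂, r₂ ≫ r₁, by
    rw [Category.assoc, ← Category.assoc i₂, h₂, Category.id_comp, h₁]⟩

lemma retract_self (X : E) : IsRetractOf E X X := ⟨𝟙 X, 𝟙 X, by simp⟩

lemma retract_of_iso {X Y : E} (e : X ≅ Y) : IsRetractOf E X Y :=
  ⟨e.hom, e.inv, e.hom_inv_id⟩

section Shifted

variable [L.CommShift ℤ]

lemma retract_shift {X : E} {Y : C} (h : IsRetractOf E X (L.obj Y)) (n : ℤ) :
    IsRetractOf E (X⟦n⟧) (L.obj (Y⟦n⟧)) := by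
  obtain ⟨i, r, hir⟩ := h
  refine ⟨i⟦n⟧' ≫ (L.commShiftIso n).inv.app Y, (L.commShiftIso n).hom.app Y ≫ r⟦n⟧', ?_⟩
  rw [Category.assoc, Iso.inv_hom_id_app_assoc, ← Functor.map_comp, hir, CategoryTheory.Functor.map_id]

end Shifted

section Loc

variable [L.CommShift ℤ] [L.IsTriangulated] [L.IsLocalization (coneIn C S)]

/-- Lemma D: surjectivity of `Hom_C(X,T) → Hom_E(LX,LT)` for `X ∈ GE`, `T ∈ LE`. -/
lemma hom_surj (hS : IsTriangulatedClass C S)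
    (hind : ∀ X ∈ S, ∃ (A B : C) (g : X ⟶ A) (f : A ⟶ B) (h : B ⟶ X⟦(1 : ℤ)⟧),
      A ∈ w.LE ∩ S ∧ B ∈ w.GE ∩ S ∧ Triangle.mk g f h ∈ distTriang C)
    {X T : C} (hX : X ∈ w.GE) (hT : T ∈ w.LE) (ψ : L.obj X ⟶ L.obj T) :
    ∃ f : X ⟶ T, L.map f = ψ := by
  haveI := hatW_isLocalization (S := S) L
  haveI : (hatW S).HasRightCalculusOfFractions := hasRightCalc hS
  obtain ⟨φ, hφ⟩ := Localization.exists_rightFraction L (hatW S) ψ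
  obtain ⟨n, hn⟩ := φ.hs
  obtain ⟨X₁, t, htw⟩ := refineW w hS hind n _ _ φ.s hn hX
  obtain ⟨f, hf⟩ := tower_descent w htw hT (t ≫ φ.f)
  refine ⟨f, ?_⟩
  have hsiso : IsIso (L.map φ.s) := Localization.inverts L (hatW S) _ φ.hs
  have hriso : IsIso (L.map (t ≫ φ.s)) :=
    Localization.inverts L (hatW S) _ (tower_hatW w hS htw)
  have htiso : IsIso (L.map t) := by
    have h1 : L.map t = L.map (t ≫ φ.s) ≫ inv (L.map φ.s) := by
      rw [L.map_comp, Category.assoc, IsIso.hom_inv_id, Category.comp_id]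
    rw [h1]; infer_instance
  have h2 : L.map t ≫ L.map φ.s ≫ L.map f = L.map t ≫ L.map φ.f := by
    have := congrArg L.map hf
    rw [L.map_comp, L.map_comp, L.map_comp] at this
    simpa [Category.assoc] using this
  have h3 : L.map φ.s ≫ L.map f = L.map φ.f := by
    rwa [cancel_epi (L.map t)] at h2
  rw [hφ]
  exact (cancel_epi (L.map φ.s)).1
    (by rw [h3, MorphismProperty.RightFraction.map_s_comp_map])

lemma L_obj_S_isZero {Z : C} (hZ : Z ∈ S) :
    IsZero (L.obj Z) := by
  have hw : coneIn C S (0 : (0 : C) ⟶ Z) := ⟨Z, 𝟙 Z, 0, contractible_distinguished₁ Z, hZ⟩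
  have hiso : IsIso (L.map (0 : (0 : C) ⟶ Z)) := Localization.inverts L (coneIn C S) _ hw
  have h0 : IsZero (L.obj (0 : C)) := by
    rw [IsZero.iff_id_eq_zero]
    calc 𝟙 (L.obj (0 : C)) = L.map (𝟙 (0 : C)) := (L.map_id _).symm
      _ = L.map 0 := by rw [Limits.id_zero]
      _ = 0 := L.map_zero _ _
  exact IsZero.of_iso h0 (asIso (L.map (0 : (0 : C) ⟶ Z))).symm

/-- kernel of the heart functor -/
lemma hom_kernel (hS : IsTriangulatedClass C S)
    (hind : ∀ X ∈ S, ∃ (A B : C) (g : X ⟶ A) (f : A ⟶ B) (h : B ⟶ X⟦(1 : ℤ)⟧),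
      A ∈ w.LE ∩ S ∧ B ∈ w.GE ∩ S ∧ Triangle.mk g f h ∈ distTriang C)
    {Y Y' : C} (hY : Y ∈ w.GE) (hY' : Y' ∈ w.LE) (f : Y ⟶ Y') :
    L.map f = 0 ↔ ∃ (Z : C) (u : Y ⟶ Z) (v : Z ⟶ Y'),
      Z ∈ S ∧ Z ∈ w.LE ∩ w.GE ∧ f = u ≫ v := by
  constructor
  · intro h0
    haveI := hatW_isLocalization (S := S) L
    haveI : (hatW S).HasRightCalculusOfFractions := hasRightCalc hS
    obtain ⟨X₀, s, hs, heq⟩ := (MorphismProperty.map_eq_iff_precomp L (hatW S) f 0).1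
      (by rw [h0, L.map_zero])
    obtain ⟨n, hn⟩ := hs
    obtain ⟨X₁, t, htw⟩ := refineW w hS hind n _ _ s hn hY
    have hsf : s ≫ f = 0 := by rw [heq, Limits.comp_zero]
    have hr0 : (t ≫ s) ≫ f = 0 := by rw [Category.assoc, hsf, Limits.comp_zero]
    obtain ⟨Z', u, v, hZ', hfac⟩ := tower_factor w hS htw f hr0
    obtain ⟨A, B, a, b, e, hA, hB, hd⟩ := hind Z' hZ'.2
    have hd' := inv_rot_of_distTriang _ hd
    have hAGE : A ∈ w.GE := ext_GE w hd hZ'.1 hB.1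
    have hm0 : (Triangle.mk a b e).invRotate.mor₁ ≫ v = 0 :=
      orth_shift (fun g => w.orthogonal B Y' hB.1 hY' g) _
    obtain ⟨k, hk⟩ := Triangle.yoneda_exact₂ _ hd' v hm0
    have hk' : v = a ≫ k := hk
    exact ⟨A, u ≫ a, k, hA.2, ⟨hA.1, hAGE⟩, by erw [Category.assoc, hfac, hk']⟩
  · rintro ⟨Z, u, v, hZS, -, rfl⟩
    have hz := L_obj_S_isZero (S := S) L hZS
    rw [L.map_comp, hz.eq_of_tgt (L.map u) 0, Limits.zero_comp]

end Loc

end ESide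

section ECore

variable {C} {S : Set C}
variable {E : Type u'} [Category.{v'} E] [HasZeroObject E] [HasShift E ℤ] [Preadditive E]
  [∀ n : ℤ, (shiftFunctor E n).Additive] [Pretriangulated E]
variable (w : WeightStructure C) (L : C ⥤ E) [L.CommShift ℤ] [L.IsTriangulated]
  [L.IsLocalization (coneIn C S)]

lemma orthE (hS : IsTriangulatedClass C S)
    (hind : ∀ X ∈ S, ∃ (A B : C) (g : X ⟶ A) (f : A ⟶ B) (h : B ⟶ X⟦(1 : ℤ)⟧),
      A ∈ w.LE ∩ S ∧ B ∈ w.GE ∩ S ∧ Triangle.mk g f h ∈ distTriang C)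
    {Y Y' : C} (hY : Y ∈ w.GE) (hY' : Y' ∈ w.LE)
    (ψ : L.obj Y ⟶ L.obj (Y'⟦(1 : ℤ)⟧)) : ψ = 0 := by
  obtain ⟨f, hf⟩ := hom_surj w L hS hind hY (w.shift_mem_LE Y' hY') ψ
  rw [← hf, w.orthogonal Y Y' hY hY' f, L.map_zero]

lemma retract_biprod {X X' : E} {Y Y' : C} (h : IsRetractOf E X (L.obj Y))
    (h' : IsRetractOf E X' (L.obj Y')) : IsRetractOf E (X ⊞ X') (L.obj (Y ⊞ Y')) := by
  obtain ⟨i, r, hir⟩ := h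
  obtain ⟨i', r', hir'⟩ := h'
  refine ⟨biprod.desc (i ≫ L.map biprod.inl) (i' ≫ L.map biprod.inr),
    biprod.lift (L.map biprod.fst ≫ r) (L.map biprod.snd ≫ r'), ?_⟩
  apply biprod.hom_ext' <;> apply biprod.hom_ext <;>
    simp [← L.map_comp_assoc, hir, hir']

end ECore

end VWS

end Auxiliary


/-- Proposition 8.1.1 of Bondarko: let `w` be a weight structure
on `C` and `D` a full triangulated subcategory (with object class `S`) on which
`w` induces a weight structure. Let `L : C ⥤ E` be the Verdier quotient
`C → C/D` (an exact localization at the class of morphisms whose cone is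
in `S`). Then (1) the Karoubi-closures of the images of `C^{w≤0}` and
`C^{w≥0}` form a weight structure on `C/D`; (2) its heart is the
Karoubi-closure of the factor category `Hw/HD`: its objects are the retracts of
images of heart objects, and for heart objects `Y, Y'`, the map
`Hom_C(Y,Y') → Hom_{C/D}(LY, LY')` is surjective with kernel the morphisms
factoring through an object of `HD`; (3) if `w` is bounded then so is the
induced weight structure. -/
theorem weightStructure_on_Verdier_quotient
    {E : Type u'} [Category.{v'} E] [HasZeroObject E] [HasShift E ℤ]
    [Preadditive E] [∀ n : ℤ, (shiftFunctor E n).Additive] [Pretriangulated E]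
    (w : WeightStructure C) (S : Set C) (hS : IsTriangulatedClass C S)
    (hind : ∀ X ∈ S, ∃ (A B : C) (g : X ⟶ A) (f : A ⟶ B) (h : B ⟶ X⟦(1 : ℤ)⟧),
      A ∈ w.LE ∩ S ∧ B ∈ w.GE ∩ S ∧ Triangle.mk g f h ∈ distTriang C)
    (L : C ⥤ E) [L.CommShift ℤ] [L.IsTriangulated]
    [L.IsLocalization (coneIn C S)] :
    ∃ wE : WeightStructure E,
      wE.LE = {X : E | ∃ Y : C, Y ∈ w.LE ∧ IsRetractOf E X (L.obj Y)} ∧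
      wE.GE = {X : E | ∃ Y : C, Y ∈ w.GE ∧ IsRetractOf E X (L.obj Y)} ∧
      wE.LE ∩ wE.GE =
        {X : E | ∃ Y : C, Y ∈ w.LE ∩ w.GE ∧ IsRetractOf E X (L.obj Y)} ∧
      (∀ Y Y' : C, Y ∈ w.LE ∩ w.GE → Y' ∈ w.LE ∩ w.GE →
        (∀ ψ : L.obj Y ⟶ L.obj Y', ∃ f : Y ⟶ Y', L.map f = ψ) ∧
        (∀ f : Y ⟶ Y', L.map f = 0 ↔
          ∃ (Z : C) (u : Y ⟶ Z) (v : Z ⟶ Y'),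
            Z ∈ S ∧ Z ∈ w.LE ∩ w.GE ∧ f = u ≫ v)) ∧
      ((∀ X : C, (∃ l : ℤ, X⟦l⟧ ∈ w.LE) ∧ (∃ l : ℤ, X⟦l⟧ ∈ w.GE)) →
        ∀ X : E, (∃ l : ℤ, X⟦l⟧ ∈ wE.LE) ∧ (∃ l : ℤ, X⟦l⟧ ∈ wE.GE)) := by
  have horth : ∀ (X X' : E), (∃ Y : C, Y ∈ w.GE ∧ IsRetractOf E X (L.obj Y)) →
      (∃ Y : C, Y ∈ w.LE ∧ IsRetractOf E X' (L.obj Y)) →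
      ∀ ψ : X ⟶ X'⟦(1 : ℤ)⟧, ψ = 0 := by
    rintro X X' ⟨Y, hY, i, r, hir⟩ ⟨Y', hY', i', r', hir'⟩ ψ
    have h := VWS.orthE w L hS hind hY hY'
      (r ≫ ψ ≫ i'⟦(1 : ℤ)⟧' ≫ (L.commShiftIso (1 : ℤ)).inv.app Y')
    have h2 : r ≫ ψ ≫ i'⟦(1 : ℤ)⟧' = 0 := by
      have h3 := congrArg (· ≫ (L.commShiftIso (1 : ℤ)).hom.app Y') h
      simpa using h3
    have e1 : i'⟦(1 : ℤ)⟧' ≫ r'⟦(1 : ℤ)⟧' = 𝟙 _ := by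
      rw [← Functor.map_comp, hir', CategoryTheory.Functor.map_id]
    have key : i ≫ (r ≫ ψ ≫ i'⟦(1 : ℤ)⟧') ≫ r'⟦(1 : ℤ)⟧' = ψ := by
      simp only [Category.assoc]
      rw [e1, Category.comp_id, ← Category.assoc, hir, Category.id_comp]
    rw [← key, h2, zero_comp, comp_zero]
  have hdec : ∀ X : E, ∃ (A B : E) (g : X ⟶ A) (f : A ⟶ B) (h : B ⟶ X⟦(1 : ℤ)⟧),
      (∃ Y : C, Y ∈ w.LE ∧ IsRetractOf E A (L.obj Y)) ∧
      (∃ Y : C, Y ∈ w.GE ∧ IsRetractOf E B (L.obj Y)) ∧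
      Triangle.mk g f h ∈ distTriang E := by
    intro X
    haveI : L.EssSurj := Localization.essSurj L (coneIn C S)
    have e : L.obj (L.objPreimage X) ≅ X := L.objObjPreimageIso X
    obtain ⟨A, B, g, f, h, hA, hB, hd⟩ := w.exists_weight_decomposition (L.objPreimage X)
    have hdE := L.map_distinguished _ hd
    refine ⟨L.obj A, L.obj B, e.inv ≫ L.map g, L.map f,
      (L.map h ≫ (L.commShiftIso (1 : ℤ)).hom.app (L.objPreimage X)) ≫ e.hom⟦(1 : ℤ)⟧',
      ⟨A, hA, VWS.retract_self _⟩, ⟨B, hB, VWS.retract_self _⟩, ?_⟩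
    refine isomorphic_distinguished _ hdE _ ?_
    exact Triangle.isoMk _ _ e.symm (Iso.refl _) (Iso.refl _) (by show (e.inv ≫ L.map g) ≫ 𝟙 (L.obj A) = e.symm.hom ≫ L.map g; simp)
      (by show L.map f ≫ 𝟙 (L.obj B) = 𝟙 (L.obj A) ≫ L.map f; simp)
      (by show ((L.map h ≫ (L.commShiftIso (1 : ℤ)).hom.app (L.objPreimage X)) ≫ e.hom⟦(1 : ℤ)⟧') ≫
            e.symm.hom⟦(1 : ℤ)⟧' = 𝟙 (L.obj B) ≫ (L.map h ≫ (L.commShiftIso (1 : ℤ)).hom.app (L.objPreimage X))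
          simp [← Functor.map_comp])
  refine ⟨{ LE := {X : E | ∃ Y : C, Y ∈ w.LE ∧ IsRetractOf E X (L.obj Y)}
            GE := {X : E | ∃ Y : C, Y ∈ w.GE ∧ IsRetractOf E X (L.obj Y)}
            zero_mem_LE := ⟨0, w.zero_mem_LE, 0, 0, (Limits.isZero_zero E).eq_of_src _ _⟩
            zero_mem_GE := ⟨0, w.zero_mem_GE, 0, 0, (Limits.isZero_zero E).eq_of_src _ _⟩
            sum_mem_LE := ?_
            sum_mem_GE := ?_
            retract_mem_LE := ?_
            retract_mem_GE := ?_
            shift_mem_LE := ?_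
            shift_mem_GE := ?_
            orthogonal := horth
            exists_weight_decomposition := hdec }, rfl, rfl, ?_, ?_, ?_⟩
  · rintro X X' ⟨Y, hY, hret⟩ ⟨Y', hY', hret'⟩
    exact ⟨Y ⊞ Y', w.sum_mem_LE _ _ hY hY', VWS.retract_biprod L hret hret'⟩
  · rintro X X' ⟨Y, hY, hret⟩ ⟨Y', hY', hret'⟩
    exact ⟨Y ⊞ Y', w.sum_mem_GE _ _ hY hY', VWS.retract_biprod L hret hret'⟩
  · rintro X X' hr ⟨Y, hY, hret⟩
    exact ⟨Y, hY, VWS.retract_trans hr hret⟩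
  · rintro X X' hr ⟨Y, hY, hret⟩
    exact ⟨Y, hY, VWS.retract_trans hr hret⟩
  · rintro X ⟨Y, hY, hret⟩
    exact ⟨Y⟦(1 : ℤ)⟧, w.shift_mem_LE Y hY, VWS.retract_shift L hret 1⟩
  · rintro X ⟨Y, hY, hret⟩
    exact ⟨Y⟦(-1 : ℤ)⟧, w.shift_mem_GE Y hY, VWS.retract_shift L hret (-1)⟩
  · -- heart identification
    apply Set.Subset.antisymm
    · rintro X ⟨⟨Y₁, hY₁, hret₁⟩, ⟨Y₂, hY₂, i₂, r₂, hir₂⟩⟩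
      obtain ⟨A, B, u, v, h, hA, hB, hd⟩ := w.exists_weight_decomposition Y₂
      have hAGE : A ∈ w.GE := VWS.ext_GE w hd hY₂ hB
      have hdE := L.map_distinguished _ hd
      have hdE' := inv_rot_of_distTriang _ hdE
      have hm : (L.mapTriangle.obj (Triangle.mk u v h)).invRotate.mor₁ ≫ r₂ = 0 :=
        VWS.orth_shift
          (fun g => horth (L.obj B) X ⟨B, hB, VWS.retract_self _⟩ ⟨Y₁, hY₁, hret₁⟩ g) _
      obtain ⟨rt, hrt⟩ := Triangle.yoneda_exact₂ _ hdE' r₂ hm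
      have hrt' : r₂ = L.map u ≫ rt := hrt
      exact ⟨A, ⟨hA, hAGE⟩, i₂ ≫ L.map u, rt,
        by erw [Category.assoc, ← hrt', hir₂]⟩
    · rintro X ⟨Y, ⟨hY₁, hY₂⟩, hret⟩
      exact ⟨⟨Y, hY₁, hret⟩, ⟨Y, hY₂, hret⟩⟩
  · -- heart hom-groups
    intro Y Y' hY hY'
    constructor
    · exact fun ψ => VWS.hom_surj w L hS hind hY.2 hY'.1 ψ
    · exact fun f => VWS.hom_kernel w L hS hind hY.2 hY'.1 f
  · -- boundedness
    intro hbound X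
    haveI : L.EssSurj := Localization.essSurj L (coneIn C S)
    have e : L.obj (L.objPreimage X) ≅ X := L.objObjPreimageIso X
    have hr : IsRetractOf E X (L.obj (L.objPreimage X)) := VWS.retract_of_iso e.symm
    obtain ⟨⟨l₁, h₁⟩, ⟨l₂, h₂⟩⟩ := hbound (L.objPreimage X)
    exact ⟨⟨l₁, ⟨(L.objPreimage X)⟦l₁⟧, h₁, VWS.retract_shift L hr l₁⟩⟩,
      ⟨l₂, ⟨(L.objPreimage X)⟦l₂⟧, h₂, VWS.retract_shift L hr l₂⟩⟩⟩
end

section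
/- Let (C, D, E, i_*, j^*, i^*, i^!, j_!, j_*) be gluing data: C, D, E are triangulated categories; i_* : D → C, j^* : C → E, i^* : C → D, i^! : C → D, j_! : E → C, j_* : E → C are exact functors; i^* is left adjoint and i^! is right adjoint to i_*; j_! is left adjoint and j_* is right adjoint to j^*; i_* is a full embedding and j^* is isomorphic to the Verdier localization of C by i_*(D); for every object X of C the adjunction morphisms fit into distinguished triangles j_!j^*X → X → i_*i^*X and i_*i^!X → X → j_*j^*X; i^*j_! = 0 and i^!j_* = 0; and the adjunction transformations i^*i_* → id_D → i^!i_* and j^*j_* → id_E → j^*j_! are isomorphisms. Suppose D and E carry weight structures w_D and w_E. Define C^{w≤0} = {X ∈ Obj C : i^!X ∈ D^{w≤0} and j^*X ∈ E^{w≤0}} and C^{w≥0} = {X ∈ Obj C : i^*X ∈ D^{w≥0} and j^*X ∈ E^{w≥0}}. Then (C^{w≤0}, C^{w≥0}) is a weight structure on C. -/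
open CategoryTheory CategoryTheory.Limits CategoryTheory.Pretriangulated ZeroObject

universe v u

variable (C : Type u) [Category.{v} C] [HasZeroObject C] [HasShift C ℤ] [Preadditive C]
  [∀ n : ℤ, (shiftFunctor C n).Additive] [Pretriangulated C]

universe v₁ u₁ v₂ u₂

section AuxiliaryLemmas

namespace WeightGlueAux

variable {A : Type*} [Category A] [HasZeroObject A] [HasShift A ℤ] [Preadditive A]
  [∀ n : ℤ, (shiftFunctor A n).Additive] [Pretriangulated A]

/-- Negation of an isomorphism in a preadditive category. -/
@[simps]
def negIso {X Y : A} (e : X ≅ Y) : X ≅ Y where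
  hom := -e.hom
  inv := -e.inv
  hom_inv_id := by simp
  inv_hom_id := by simp

lemma exists_iso₃ {T T' : Triangle A} (hT : T ∈ distTriang A) (hT' : T' ∈ distTriang A)
    (e₁ : T.obj₁ ≅ T'.obj₁) (e₂ : T.obj₂ ≅ T'.obj₂)
    (comm : T.mor₁ ≫ e₂.hom = e₁.hom ≫ T'.mor₁) : Nonempty (T.obj₃ ≅ T'.obj₃) := by
  obtain ⟨c, hc₁, hc₂⟩ :=
    complete_distinguished_triangle_morphism T T' hT hT' e₁.hom e₂.hom comm
  let φ : T ⟶ T' :=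
    { hom₁ := e₁.hom
      hom₂ := e₂.hom
      hom₃ := c
      comm₁ := comm
      comm₂ := hc₁
      comm₃ := hc₂ }
  have : IsIso φ.hom₃ := by
    refine isIso₃_of_isIso₁₂ φ hT hT' ?_ ?_
    · show IsIso e₁.hom; infer_instance
    · show IsIso e₂.hom; infer_instance
  exact ⟨asIso φ.hom₃⟩

lemma exists_iso₁ {T T' : Triangle A} (hT : T ∈ distTriang A) (hT' : T' ∈ distTriang A)
    (e₂ : T.obj₂ ≅ T'.obj₂) (e₃ : T.obj₃ ≅ T'.obj₃)
    (comm : T.mor₂ ≫ e₃.hom = e₂.hom ≫ T'.mor₂) : Nonempty (T.obj₁ ≅ T'.obj₁) := by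
  obtain ⟨e⟩ := exists_iso₃ (rot_of_distTriang _ hT) (rot_of_distTriang _ hT') e₂ e₃ comm
  exact ⟨(shiftFunctor A (1 : ℤ)).preimageIso e⟩

lemma exists_iso₂ {T T' : Triangle A} (hT : T ∈ distTriang A) (hT' : T' ∈ distTriang A)
    (e₁ : T.obj₁ ≅ T'.obj₁) (e₃ : T.obj₃ ≅ T'.obj₃)
    (comm : T.mor₃ ≫ (shiftFunctor A (1 : ℤ)).map e₁.hom = e₃.hom ≫ T'.mor₃) :
    Nonempty (T.obj₂ ≅ T'.obj₂) := by
  obtain ⟨e⟩ := exists_iso₁ (rot_of_distTriang _ hT) (rot_of_distTriang _ hT') e₃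
    ((shiftFunctor A (1 : ℤ)).mapIso e₁) comm
  exact ⟨e⟩

variable {B : Type*} [Category B] [HasZeroObject B] [HasShift B ℤ] [Preadditive B]
  [∀ n : ℤ, (shiftFunctor B n).Additive] [Pretriangulated B]

lemma exists_mapBiprodIso (F : A ⥤ B) [F.CommShift ℤ] [F.IsTriangulated] (X Y : A) :
    Nonempty (F.obj (X ⊞ Y) ≅ F.obj X ⊞ F.obj Y) := by
  refine exists_iso₂ (F.map_distinguished _ (binaryBiproductTriangle_distinguished X Y))
    (binaryBiproductTriangle_distinguished (F.obj X) (F.obj Y)) (Iso.refl _) (Iso.refl _) ?_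
  show (F.map (0 : Y ⟶ X⟦(1 : ℤ)⟧) ≫ (F.commShiftIso (1 : ℤ)).hom.app X) ≫
    (shiftFunctor B (1 : ℤ)).map (𝟙 (F.obj X)) = 𝟙 (F.obj Y) ≫ 0
  simp

lemma mem_LE_of_iso (w : WeightStructure A) {X Y : A} (e : X ≅ Y) (h : Y ∈ w.LE) : X ∈ w.LE :=
  w.retract_mem_LE X Y ⟨e.hom, e.inv, e.hom_inv_id⟩ h

lemma mem_GE_of_iso (w : WeightStructure A) {X Y : A} (e : X ≅ Y) (h : Y ∈ w.GE) : X ∈ w.GE :=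
  w.retract_mem_GE X Y ⟨e.hom, e.inv, e.hom_inv_id⟩ h

lemma mem_LE_of_isZero (w : WeightStructure A) {X : A} (h : IsZero X) : X ∈ w.LE :=
  w.retract_mem_LE X 0 ⟨0, 0, h.eq_of_src _ _⟩ w.zero_mem_LE

lemma mem_GE_of_isZero (w : WeightStructure A) {X : A} (h : IsZero X) : X ∈ w.GE :=
  w.retract_mem_GE X 0 ⟨0, 0, h.eq_of_src _ _⟩ w.zero_mem_GE

end WeightGlueAux

end AuxiliaryLemmas

open WeightGlueAux

/-- Theorem 8.2.3 of Bondarko, gluing of weight structures: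
given gluing data `(C, D, E, i_*, j^*, i^*, i^!, j_!, j_*)` and weight
structures `w_D` on `D` and `w_E` on `E`, the pair
`C^{w≤0} = {X : i^!X ∈ D^{w≤0}, j^*X ∈ E^{w≤0}}`,
`C^{w≥0} = {X : i^*X ∈ D^{w≥0}, j^*X ∈ E^{w≥0}}`
is a weight structure on `C`. -/
theorem weightStructure_glue
    {D : Type u₁} [Category.{v₁} D] [HasZeroObject D] [HasShift D ℤ]
    [Preadditive D] [∀ n : ℤ, (shiftFunctor D n).Additive] [Pretriangulated D]
    {E : Type u₂} [Category.{v₂} E] [HasZeroObject E] [HasShift E ℤ]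
    [Preadditive E] [∀ n : ℤ, (shiftFunctor E n).Additive] [Pretriangulated E]
    -- the six exact functors of the gluing data
    (iPush : D ⥤ C) [iPush.CommShift ℤ] [iPush.IsTriangulated]
    (jUpper : C ⥤ E) [jUpper.CommShift ℤ] [jUpper.IsTriangulated]
    (iStar : C ⥤ D) [iStar.CommShift ℤ] [iStar.IsTriangulated]
    (iShriek : C ⥤ D) [iShriek.CommShift ℤ] [iShriek.IsTriangulated]
    (jLower : E ⥤ C) [jLower.CommShift ℤ] [jLower.IsTriangulated]
    (jPush : E ⥤ C) [jPush.CommShift ℤ] [jPush.IsTriangulated]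
    -- the adjunctions
    (adjI₁ : iStar ⊣ iPush) (adjI₂ : iPush ⊣ iShriek)
    (adjJ₁ : jLower ⊣ jUpper) (adjJ₂ : jUpper ⊣ jPush)
    -- `i_*` is a full embedding
    [iPush.Full] [iPush.Faithful]
    -- `j^*` is the Verdier localization of `C` by `i_*(D)`
    [jUpper.IsLocalization
      (coneIn C {X : C | ∃ Y : D, Nonempty (X ≅ iPush.obj Y)})]
    -- the two triangles of adjunction morphisms are distinguished
    (htri₁ : ∀ X : C, ∃ δ : iPush.obj (iStar.obj X) ⟶
        (jLower.obj (jUpper.obj X))⟦(1 : ℤ)⟧,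
      Triangle.mk (adjJ₁.counit.app X) (adjI₁.unit.app X) δ ∈ distTriang C)
    (htri₂ : ∀ X : C, ∃ δ : jPush.obj (jUpper.obj X) ⟶
        (iPush.obj (iShriek.obj X))⟦(1 : ℤ)⟧,
      Triangle.mk (adjI₂.counit.app X) (adjJ₂.unit.app X) δ ∈ distTriang C)
    -- `i^* j_! = 0` and `i^! j_* = 0`
    (hzero₁ : ∀ Y : E, IsZero (iStar.obj (jLower.obj Y)))
    (hzero₂ : ∀ Y : E, IsZero (iShriek.obj (jPush.obj Y)))
    -- the adjunction transformations `i^*i_* → 1 → i^!i_*` and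
    -- `j^*j_* → 1 → j^*j_!` are isomorphisms
    [IsIso adjI₁.counit] [IsIso adjI₂.unit] [IsIso adjJ₂.counit] [IsIso adjJ₁.unit]
    -- weight structures on `D` and `E`
    (wD : WeightStructure D) (wE : WeightStructure E) :
    ∃ w : WeightStructure C,
      w.LE = {X : C | iShriek.obj X ∈ wD.LE ∧ jUpper.obj X ∈ wE.LE} ∧
      w.GE = {X : C | iStar.obj X ∈ wD.GE ∧ jUpper.obj X ∈ wE.GE} := by
  classical
  -- `j^* i_* = 0`
  have unitIPush_iso : ∀ Z : D, IsIso (adjI₁.unit.app (iPush.obj Z)) := by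
    intro Z
    have h2 : adjI₁.unit.app (iPush.obj Z) = inv (iPush.map (adjI₁.counit.app Z)) :=
      IsIso.eq_inv_of_inv_hom_id (adjI₁.right_triangle_components Z)
    rw [h2]
    infer_instance
  have jZeroPush : ∀ Z : D, IsZero (jUpper.obj (iPush.obj Z)) := by
    intro Z
    obtain ⟨δ, hT⟩ := htri₁ (iPush.obj Z)
    have h0 : IsZero (jLower.obj (jUpper.obj (iPush.obj Z))) :=
      Triangle.isZero₁_of_isIso₂ _ hT (unitIPush_iso Z)
    have h1 : IsZero (jUpper.obj (jLower.obj (jUpper.obj (iPush.obj Z)))) :=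
      jUpper.map_isZero h0
    exact h1.of_iso (asIso (adjJ₁.unit.app (jUpper.obj (iPush.obj Z))))
  refine ⟨{
      LE := {X : C | iShriek.obj X ∈ wD.LE ∧ jUpper.obj X ∈ wE.LE}
      GE := {X : C | iStar.obj X ∈ wD.GE ∧ jUpper.obj X ∈ wE.GE}
      zero_mem_LE := ⟨mem_LE_of_isZero wD (iShriek.map_isZero (isZero_zero C)),
                      mem_LE_of_isZero wE (jUpper.map_isZero (isZero_zero C))⟩
      zero_mem_GE := ⟨mem_GE_of_isZero wD (iStar.map_isZero (isZero_zero C)),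
                      mem_GE_of_isZero wE (jUpper.map_isZero (isZero_zero C))⟩
      sum_mem_LE := ?_
      sum_mem_GE := ?_
      retract_mem_LE := ?_
      retract_mem_GE := ?_
      shift_mem_LE := ?_
      shift_mem_GE := ?_
      orthogonal := ?_
      exists_weight_decomposition := ?_ }, rfl, rfl⟩
  · -- sum_mem_LE
    rintro X Y ⟨hX1, hX2⟩ ⟨hY1, hY2⟩
    obtain ⟨e₁⟩ := exists_mapBiprodIso iShriek X Y
    obtain ⟨e₂⟩ := exists_mapBiprodIso jUpper X Y
    exact ⟨mem_LE_of_iso wD e₁ (wD.sum_mem_LE _ _ hX1 hY1),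
           mem_LE_of_iso wE e₂ (wE.sum_mem_LE _ _ hX2 hY2)⟩
  · -- sum_mem_GE
    rintro X Y ⟨hX1, hX2⟩ ⟨hY1, hY2⟩
    obtain ⟨e₁⟩ := exists_mapBiprodIso iStar X Y
    obtain ⟨e₂⟩ := exists_mapBiprodIso jUpper X Y
    exact ⟨mem_GE_of_iso wD e₁ (wD.sum_mem_GE _ _ hX1 hY1),
           mem_GE_of_iso wE e₂ (wE.sum_mem_GE _ _ hX2 hY2)⟩
  · -- retract_mem_LE
    rintro X Y ⟨i, r, hir⟩ ⟨hY1, hY2⟩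
    refine ⟨wD.retract_mem_LE _ _ ⟨iShriek.map i, iShriek.map r, ?_⟩ hY1,
            wE.retract_mem_LE _ _ ⟨jUpper.map i, jUpper.map r, ?_⟩ hY2⟩
    · rw [← CategoryTheory.Functor.map_comp, hir, CategoryTheory.Functor.map_id]
    · rw [← CategoryTheory.Functor.map_comp, hir, CategoryTheory.Functor.map_id]
  · -- retract_mem_GE
    rintro X Y ⟨i, r, hir⟩ ⟨hY1, hY2⟩
    refine ⟨wD.retract_mem_GE _ _ ⟨iStar.map i, iStar.map r, ?_⟩ hY1,
            wE.retract_mem_GE _ _ ⟨jUpper.map i, jUpper.map r, ?_⟩ hY2⟩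
    · rw [← CategoryTheory.Functor.map_comp, hir, CategoryTheory.Functor.map_id]
    · rw [← CategoryTheory.Functor.map_comp, hir, CategoryTheory.Functor.map_id]
  · -- shift_mem_LE
    rintro X ⟨h1, h2⟩
    exact ⟨mem_LE_of_iso wD ((iShriek.commShiftIso (1 : ℤ)).app X) (wD.shift_mem_LE _ h1),
           mem_LE_of_iso wE ((jUpper.commShiftIso (1 : ℤ)).app X) (wE.shift_mem_LE _ h2)⟩
  · -- shift_mem_GE
    rintro X ⟨h1, h2⟩
    exact ⟨mem_GE_of_iso wD ((iStar.commShiftIso (-1 : ℤ)).app X) (wD.shift_mem_GE _ h1),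
           mem_GE_of_iso wE ((jUpper.commShiftIso (-1 : ℤ)).app X) (wE.shift_mem_GE _ h2)⟩
  · -- orthogonal
    rintro X Y ⟨hX1, hX2⟩ ⟨hY1, hY2⟩ f
    obtain ⟨δ, hT⟩ := htri₁ X
    have h1 : adjJ₁.counit.app X ≫ f = 0 := by
      have hsymm := (adjJ₁.homEquiv (jUpper.obj X) (Y⟦(1 : ℤ)⟧)).symm_apply_apply
        (adjJ₁.counit.app X ≫ f)
      rw [Adjunction.homEquiv_counit] at hsymm
      have hz : (adjJ₁.homEquiv (jUpper.obj X) (Y⟦(1 : ℤ)⟧)) (adjJ₁.counit.app X ≫ f) = 0 := by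
        have ho := wE.orthogonal _ _ hX2 hY2
          (((adjJ₁.homEquiv (jUpper.obj X) (Y⟦(1 : ℤ)⟧)) (adjJ₁.counit.app X ≫ f)) ≫
            (jUpper.commShiftIso (1 : ℤ)).hom.app Y)
        have := congrArg (fun t => t ≫ (jUpper.commShiftIso (1 : ℤ)).inv.app Y) ho
        simpa using this
      rw [← hsymm, hz, CategoryTheory.Functor.map_zero, zero_comp]
    obtain ⟨g, hg⟩ := Triangle.yoneda_exact₂ _ hT f h1
    have h2 : g = 0 := by
      have hsymm := (adjI₂.homEquiv (iStar.obj X) (Y⟦(1 : ℤ)⟧)).symm_apply_apply g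
      rw [Adjunction.homEquiv_counit] at hsymm
      have hz : (adjI₂.homEquiv (iStar.obj X) (Y⟦(1 : ℤ)⟧)) g = 0 := by
        have ho := wD.orthogonal _ _ hX1 hY1
          (((adjI₂.homEquiv (iStar.obj X) (Y⟦(1 : ℤ)⟧)) g) ≫
            (iShriek.commShiftIso (1 : ℤ)).hom.app Y)
        have := congrArg (fun t => t ≫ (iShriek.commShiftIso (1 : ℤ)).inv.app Y) ho
        simpa using this
      rw [← hsymm, hz, CategoryTheory.Functor.map_zero, zero_comp]
      rfl
    rw [hg, h2, comp_zero]
    rfl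
  · -- exists_weight_decomposition
    intro X
    obtain ⟨P, Q, p, pq, q, hP, hQ, hTE⟩ := wE.exists_weight_decomposition (jUpper.obj X)
    set u : X ⟶ jPush.obj P := (adjJ₂.homEquiv X P) p with hu
    obtain ⟨R, v, w', hT1⟩ := distinguished_cocone_triangle u
    have key1 : jUpper.map u ≫ adjJ₂.counit.app P = p := by
      have h := (adjJ₂.homEquiv X P).symm_apply_apply p
      rw [Adjunction.homEquiv_counit] at h
      rw [← hu] at h
      exact h
    -- `j^* R ≅ Q`
    have hTR1 := jUpper.map_distinguished _ hT1
    obtain ⟨eRQ⟩ : Nonempty (jUpper.obj R ≅ Q) := by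
      refine exists_iso₃ hTR1 hTE (Iso.refl _) (@asIso _ _ _ _ (adjJ₂.counit.app P) (NatIso.isIso_app_of_isIso _ _)) ?_
      show jUpper.map u ≫ adjJ₂.counit.app P = 𝟙 (jUpper.obj X) ≫ p
      rw [Category.id_comp]
      exact key1
    -- the third map of `i^! T1` is an isomorphism
    have hTI1 := iShriek.map_distinguished _ hT1
    haveI hIsoI : IsIso ((iShriek.mapTriangle.obj (Triangle.mk u v w')).mor₃) :=
      (Triangle.isZero₂_iff_isIso₃ _ hTI1).1 (hzero₂ P)
    -- weight decomposition of `(i^* R)⟦-1⟧` in `D`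
    obtain ⟨L₀, G₀, a, ab, c, hL₀, hG₀, hTD⟩ :=
      wD.exists_weight_decomposition ((iStar.obj R)⟦(-1 : ℤ)⟧)
    set κ : (((iStar.obj R)⟦(-1 : ℤ)⟧)⟦(1 : ℤ)⟧ ≅ iStar.obj R) :=
      (shiftFunctorCompIsoId D (-1 : ℤ) (1 : ℤ) (by omega)).app (iStar.obj R) with hκ
    set a' : iStar.obj R ⟶ (L₀⟦(1 : ℤ)⟧) := κ.inv ≫ (shiftFunctor D (1 : ℤ)).map a with ha'
    set r : R ⟶ iPush.obj (L₀⟦(1 : ℤ)⟧) := (adjI₁.homEquiv R (L₀⟦(1 : ℤ)⟧)) a' with hr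
    have key2 : iStar.map r ≫ adjI₁.counit.app (L₀⟦(1 : ℤ)⟧) = a' := by
      have h := (adjI₁.homEquiv R (L₀⟦(1 : ℤ)⟧)).symm_apply_apply a'
      rw [Adjunction.homEquiv_counit] at h
      rw [← hr] at h
      exact h
    obtain ⟨B, β, γ, hT2⟩ := distinguished_cocone_triangle₁ r
    -- `i^* B ≅ G₀`
    have hTS2 := iStar.map_distinguished _ hT2
    obtain ⟨eBG⟩ : Nonempty (iStar.obj B ≅ G₀) := by
      refine exists_iso₁ hTS2 (rot_of_distTriang _ (rot_of_distTriang _ hTD))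
        (negIso κ.symm) (@asIso _ _ _ _ (adjI₁.counit.app (L₀⟦(1 : ℤ)⟧)) (NatIso.isIso_app_of_isIso _ _)) ?_
      show iStar.map r ≫ adjI₁.counit.app (L₀⟦(1 : ℤ)⟧) = (-κ.inv) ≫ (-(shiftFunctor D (1 : ℤ)).map a)
      rw [key2, ha']
      simp
    -- `j^* B ≅ j^* R`
    have hTJ2 := jUpper.map_distinguished _ hT2
    haveI hβiso : IsIso (jUpper.map β) :=
      (Triangle.isZero₃_iff_isIso₁ _ hTJ2).1 (jZeroPush _)
    have hiB : iStar.obj B ∈ wD.GE := mem_GE_of_iso wD eBG hG₀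
    have hjB : jUpper.obj B ∈ wE.GE := mem_GE_of_iso wE (asIso (jUpper.map β) ≪≫ eRQ) hQ
    -- the weight decomposition triangle of `X`
    obtain ⟨Aobj, f, g, hTA⟩ := distinguished_cocone_triangle₂ (β ≫ w')
    have hTAu := jUpper.map_distinguished _ hTA
    obtain ⟨eAP⟩ : Nonempty (jUpper.obj Aobj ≅ jUpper.obj (jPush.obj P)) := by
      refine exists_iso₁ (rot_of_distTriang _ hTAu) (rot_of_distTriang _ hTR1)
        (@asIso _ _ _ _ (jUpper.map β) hβiso) (Iso.refl _) ?_
      show (jUpper.map (β ≫ w') ≫ (jUpper.commShiftIso (1 : ℤ)).hom.app X) ≫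
          𝟙 ((jUpper ⋙ shiftFunctor E (1 : ℤ)).obj X) =
        jUpper.map β ≫ (jUpper.map w' ≫ (jUpper.commShiftIso (1 : ℤ)).hom.app X)
      rw [Category.comp_id, CategoryTheory.Functor.map_comp, Category.assoc]
    have hjA : jUpper.obj Aobj ∈ wE.LE :=
      mem_LE_of_iso wE (eAP ≪≫ asIso (adjJ₂.counit.app P)) hP
    have hTAi := iShriek.map_distinguished _ hTA
    have hTI2 := iShriek.map_distinguished _ hT2
    obtain ⟨eAL⟩ : Nonempty (iShriek.obj Aobj ≅
        (iShriek.obj (iPush.obj (L₀⟦(1 : ℤ)⟧)))⟦(-1 : ℤ)⟧) := by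
      refine exists_iso₁ (rot_of_distTriang _ hTAi) (inv_rot_of_distTriang _ hTI2)
        (Iso.refl _)
        ((asIso ((iShriek.mapTriangle.obj (Triangle.mk u v w')).mor₃)).symm) ?_
      show (iShriek.map (β ≫ w') ≫ (iShriek.commShiftIso (1 : ℤ)).hom.app X) ≫
          @inv _ _ _ _ ((iShriek.mapTriangle.obj (Triangle.mk u v w')).mor₃) hIsoI =
        𝟙 (iShriek.obj B) ≫ iShriek.map β
      rw [Category.id_comp]
      have hsplit : iShriek.map (β ≫ w') ≫ (iShriek.commShiftIso (1 : ℤ)).hom.app X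
          = iShriek.map β ≫
            (iShriek.map w' ≫ (iShriek.commShiftIso (1 : ℤ)).hom.app X) := by
        rw [CategoryTheory.Functor.map_comp, Category.assoc]
      rw [hsplit, Category.assoc]
      exact (congrArg (fun t => iShriek.map β ≫ t)
        (IsIso.hom_inv_id ((iShriek.mapTriangle.obj (Triangle.mk u v w')).mor₃))).trans
        (Category.comp_id _)
    have hiA : iShriek.obj Aobj ∈ wD.LE := by
      refine mem_LE_of_iso wD (eAL ≪≫
        (shiftFunctor D (-1 : ℤ)).mapIso (asIso (adjI₂.unit.app (L₀⟦(1 : ℤ)⟧))).symm ≪≫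
        (shiftFunctorCompIsoId D (1 : ℤ) (-1 : ℤ) (by omega)).app L₀) hL₀
    exact ⟨Aobj, B, f, g, β ≫ w', ⟨hiA, hjA⟩, ⟨hiB, hjB⟩, hTA⟩
end
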